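/- Let T > 0, v > 0, r > 0, f ≥ 0 and δ ≥ 0 be real numbers. Define the trader's profit from buying τ tokens as Profit(τ) = τ·v·(1+δ) − (1+f)·τ·T·v·(1+r)/(τ + (1+r)·(T−τ)) for τ ∈ [0, T]. Then the quantity τ⋆ = T·min{1, ((1+r)/r)·max{0, 1 − √((1+f)/(1+δ))}} lies in [0, T] and satisfies Profit(τ) ≤ Profit(τ⋆) for every τ ∈ [0, T]. -/
import Mathlib

lemma profit_le_aux (T v r f δ τ σ : ℝ) (hT : 0 < T) (hv : 0 ≤ v) (hr : 0 < r)
    (hτ : τ ∈ Set.Icc 0 T) (hσ : σ ∈ Set.Icc 0 T)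
    (hE : 0 ≤ (σ - τ) * ((1 + δ) * ((1 + r) * T - r * σ) * ((1 + r) * T - r * τ)
        - (1 + f) * (1 + r) ^ 2 * T ^ 2)) :
    τ * v * (1 + δ) - (1 + f) * τ * T * v * (1 + r) / (τ + (1 + r) * (T - τ)) ≤
    σ * v * (1 + δ) - (1 + f) * σ * T * v * (1 + r) / (σ + (1 + r) * (T - σ)) := by
  obtain ⟨hτ0, hτT⟩ := hτ
  obtain ⟨hσ0, hσT⟩ := hσ
  have hDτ : 0 < τ + (1 + r) * (T - τ) := by nlinarith
  have hDσ : 0 < σ + (1 + r) * (T - σ) := by nlinarith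
  have key : σ * v * (1 + δ) - (1 + f) * σ * T * v * (1 + r) / (σ + (1 + r) * (T - σ))
      - (τ * v * (1 + δ) - (1 + f) * τ * T * v * (1 + r) / (τ + (1 + r) * (T - τ)))
      = v * ((σ - τ) * ((1 + δ) * ((1 + r) * T - r * σ) * ((1 + r) * T - r * τ)
        - (1 + f) * (1 + r) ^ 2 * T ^ 2))
        / ((σ + (1 + r) * (T - σ)) * (τ + (1 + r) * (T - τ))) := by
    field_simp
    ring
  have hpos : 0 ≤ v * ((σ - τ) * ((1 + δ) * ((1 + r) * T - r * σ) * ((1 + r) * T - r * τ)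
        - (1 + f) * (1 + r) ^ 2 * T ^ 2))
        / ((σ + (1 + r) * (T - σ)) * (τ + (1 + r) * (T - τ))) :=
    div_nonneg (mul_nonneg hv hE) (le_of_lt (mul_pos hDσ hDτ))
  linarith

/-- Optimal trade size: on a pool with deposit `T`, value `v`, range parameter `r` and fee
`f`, a trader with valuation shock `δ` maximizing
`Profit(τ) = τ·v·(1+δ) − (1+f)·τ·T·v·(1+r)/(τ + (1+r)·(T−τ))` over `τ ∈ [0, T]` optimally
trades `τ⋆ = T·min{1, ((1+r)/r)·max{0, 1 − √((1+f)/(1+δ))}}`. -/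
theorem optimal_trade_size
    (T v r f δ : ℝ) (hT : 0 < T) (hv : 0 < v) (hr : 0 < r) (hf : 0 ≤ f) (hδ : 0 ≤ δ) :
    T * min 1 ((1 + r) / r * max 0 (1 - Real.sqrt ((1 + f) / (1 + δ)))) ∈ Set.Icc 0 T ∧
    ∀ τ ∈ Set.Icc (0 : ℝ) T,
      τ * v * (1 + δ) - (1 + f) * τ * T * v * (1 + r) / (τ + (1 + r) * (T - τ)) ≤
      (T * min 1 ((1 + r) / r * max 0 (1 - Real.sqrt ((1 + f) / (1 + δ))))) * v * (1 + δ) -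
        (1 + f) * (T * min 1 ((1 + r) / r * max 0 (1 - Real.sqrt ((1 + f) / (1 + δ))))) * T *
          v * (1 + r) /
          ((T * min 1 ((1 + r) / r * max 0 (1 - Real.sqrt ((1 + f) / (1 + δ))))) +
            (1 + r) * (T - T * min 1 ((1 + r) / r * max 0 (1 - Real.sqrt ((1 + f) / (1 + δ)))))) := by
  set s := Real.sqrt ((1 + f) / (1 + δ)) with hs_def
  have hratio : (0 : ℝ) < (1 + f) / (1 + δ) := by positivity
  have hs0 : 0 ≤ s := Real.sqrt_nonneg _
  have hs2 : s ^ 2 = (1 + f) / (1 + δ) := Real.sq_sqrt (le_of_lt hratio)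
  have hfδ : 1 + f = (1 + δ) * s ^ 2 := by
    rw [hs2]; field_simp
  set m := min 1 ((1 + r) / r * max 0 (1 - s)) with hm_def
  have hm0 : 0 ≤ m := le_min (by norm_num) (by positivity)
  have hm1 : m ≤ 1 := min_le_left _ _
  have hmem : T * m ∈ Set.Icc (0 : ℝ) T := by
    constructor
    · positivity
    · nlinarith
  refine ⟨hmem, fun τ hτ => ?_⟩
  apply profit_le_aux T v r f δ τ (T * m) hT hv.le hr hτ hmem
  obtain ⟨hτ0, hτT⟩ := hτ
  by_cases h1 : 1 - s ≤ 0
  · -- s ≥ 1, so m = 0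
    have hmax : max 0 (1 - s) = 0 := max_eq_left h1
    have hm : m = 0 := by rw [hm_def, hmax, mul_zero]; simp
    rw [hm]
    have hs1 : 1 ≤ s := by linarith
    have hs21 : 1 ≤ s ^ 2 := by nlinarith
    rw [hfδ]
    have hE1 : (T * 0 - τ) * ((1 + δ) * ((1 + r) * T - r * (T * 0)) * ((1 + r) * T - r * τ)
        - (1 + δ) * s ^ 2 * (1 + r) ^ 2 * T ^ 2)
        = (τ * (1 + δ) * ((1 + r) * T)) * ((s ^ 2 - 1) * ((1 + r) * T) + r * τ) := by ring
    rw [hE1]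
    have hp1 : 0 ≤ τ * (1 + δ) * ((1 + r) * T) := by positivity
    have hp2 : 0 ≤ (s ^ 2 - 1) * ((1 + r) * T) + r * τ := by
      have : 0 ≤ (s ^ 2 - 1) * ((1 + r) * T) := by
        apply mul_nonneg (by linarith) (by positivity)
      nlinarith
    exact mul_nonneg hp1 hp2
  · push_neg at h1
    have hmax : max 0 (1 - s) = 1 - s := max_eq_right (by linarith)
    by_cases h2 : 1 ≤ (1 + r) / r * (1 - s)
    · -- m = 1
      have hm : m = 1 := by rw [hm_def, hmax]; exact min_eq_left h2
      rw [hm, mul_one]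
      have h3 : r ≤ (1 + r) * (1 - s) := by
        rw [div_mul_eq_mul_div, le_div_iff₀ hr] at h2
        linarith
      have h4 : s * (1 + r) ≤ 1 := by nlinarith
      have h5 : s ^ 2 * (1 + r) ^ 2 ≤ 1 := by
        nlinarith [mul_nonneg (sub_nonneg.mpr h4) (by positivity : (0:ℝ) ≤ 1 + s * (1 + r))]
      rw [hfδ]
      have hE2 : (T - τ) * ((1 + δ) * ((1 + r) * T - r * T) * ((1 + r) * T - r * τ)
          - (1 + δ) * s ^ 2 * (1 + r) ^ 2 * T ^ 2)
          = ((T - τ) * ((1 + δ) * T)) * ((1 - s ^ 2 * (1 + r) ^ 2) * T + r * (T - τ)) := by ring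
      rw [hE2]
      have hp1 : 0 ≤ (T - τ) * ((1 + δ) * T) :=
        mul_nonneg (by linarith) (by positivity)
      have hp2 : 0 ≤ (1 - s ^ 2 * (1 + r) ^ 2) * T + r * (T - τ) := by
        have := mul_nonneg (sub_nonneg.mpr h5) hT.le
        nlinarith
      exact mul_nonneg hp1 hp2
    · -- interior: m = (1+r)/r * (1-s)
      push_neg at h2
      have hm : m = (1 + r) / r * (1 - s) := by rw [hm_def, hmax]; exact min_eq_right h2.le
      have hE : (T * m - τ) * ((1 + δ) * ((1 + r) * T - r * (T * m)) * ((1 + r) * T - r * τ)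
          - (1 + f) * (1 + r) ^ 2 * T ^ 2)
          = r * (1 + δ) * (1 + r) * s * T * (T * m - τ) ^ 2 := by
        rw [hm, hfδ]
        field_simp
        ring
      rw [hE]
      positivity
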